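/- Let G be a group and k, l ∈ ℕ with l ≥ 1. Let π : G ≀ Σ(Fin k × Fin l) → Perm (Fin k × Fin l) be the projection, and let B ≤ Perm (Fin k × Fin l) be the image of Perm (Fin l) ≀ Σ_k under its faithful block action on Fin k × Fin l, (τ, σ) • (a, b) = (σ a, τ (σ a) b). Then π⁻¹(B) is exactly the range of the homomorphism Θ : (G ≀ Σ_l) ≀ Σ_k → G ≀ Σ(Fin k × Fin l). (This is the subgroup identity (Σ_m ≀ Σ_{kl}) ∩ (Σ_{klm} × (Σ_l ≀ Σ_k)) = (Σ_m ≀ Σ_l) ≀ Σ_k inside Σ_{klm} × Σ_{kl} used in square (3) of the paper's verification of the fifth τ-ring axiom.) -/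

import Mathlib

open Equiv

/-- The action of `Perm I` on `I → G` by `(σ • g) i = g (σ⁻¹ i)`. -/
def permAut (G : Type*) [Group G] (I : Type*) : Equiv.Perm I →* MulAut (I → G) where
  toFun σ :=
    { toFun := fun g => g ∘ σ.symm
      invFun := fun g => g ∘ σ
      left_inv := fun g => by funext i; simp
      right_inv := fun g => by funext i; simp
      map_mul' := fun g h => rfl }
  map_one' := by
    ext g i
    rfl
  map_mul' := fun σ τ => by
    ext g i
    rfl

/-- The wreath product `G ≀ Σ(I)`. -/
abbrev Wreath (G : Type*) [Group G] (I : Type*) :=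
  (I → G) ⋊[permAut G I] Equiv.Perm I

/-- The action of `G ≀ Σ(I)` on `I × T`, as a homomorphism to permutations. -/
def wreathPermHom (G : Type*) [Group G] (I T : Type*) [MulAction G T] :
    Wreath G I →* Equiv.Perm (I × T) where
  toFun w :=
    { toFun := fun p => (w.right p.1, w.left (w.right p.1) • p.2)
      invFun := fun p => (w.right⁻¹ p.1, (w.left p.1)⁻¹ • p.2)
      left_inv := fun p => by simp
      right_inv := fun p => by simp }
  map_one' := by
    ext p <;> simp
  map_mul' := fun w₁ w₂ => by
    ext p <;> simp [permAut, mul_smul]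


/-- The homomorphism `Θ : (G ≀ Σ_l) ≀ Σ_k → G ≀ Σ(Fin k × Fin l)`, sending `(w, σ)`,
where `w a = (g_a, τ_a)`, to `(g', ρ)` with `g' (a, b) = g_a b` and
`ρ (a, b) = (σ a, τ_{σ a} b)`. -/
def Theta (G : Type*) [Group G] (k l : ℕ) :
    Wreath (Wreath G (Fin l)) (Fin k) →* Wreath G (Fin k × Fin l) where
  toFun w :=
    ⟨fun p => (w.left p.1).left p.2,
      { toFun := fun p => (w.right p.1, (w.left (w.right p.1)).right p.2)
        invFun := fun p => (w.right⁻¹ p.1, (w.left p.1).right⁻¹ p.2)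
        left_inv := fun p => by simp
        right_inv := fun p => by simp }⟩
  map_one' := by
    ext p
    · simp
    · simp
    · simp
  map_mul' := fun w₁ w₂ => by
    ext p
    all_goals
      simp [permAut, SemidirectProduct.mul_left, SemidirectProduct.mul_right,
        Equiv.Perm.mul_apply, Equiv.Perm.inv_def, -SemidirectProduct.mk_eq_inl_mul_inr]
    all_goals rfl


section Theta

variable (G : Type*) [Group G] (k l : ℕ)

theorem Theta_right (w : Wreath (Wreath G (Fin l)) (Fin k)) :
    (Theta G k l w).right =
      wreathPermHom (Perm (Fin l)) (Fin k) (Fin l) ⟨fun a => (w.left a).right, w.right⟩ := by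
  ext p <;> rfl

theorem Theta_mk_curry (g : Fin k × Fin l → G) (τ : Fin k → Perm (Fin l)) (σ : Perm (Fin k)) :
    Theta G k l ⟨fun a => ⟨fun b => g (a, b), τ a⟩, σ⟩ =
      ⟨g, wreathPermHom (Perm (Fin l)) (Fin k) (Fin l) ⟨τ, σ⟩⟩ := by
  ext p <;> rfl

end Theta

theorem statement4_general (G : Type*) [Group G] (k l : ℕ) :
    Subgroup.comap
        (SemidirectProduct.rightHom :
          Wreath G (Fin k × Fin l) →* Equiv.Perm (Fin k × Fin l))
        (MonoidHom.range (wreathPermHom (Equiv.Perm (Fin l)) (Fin k) (Fin l))) =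
      MonoidHom.range (Theta G k l) := by
  ext x
  simp only [Subgroup.mem_comap, MonoidHom.mem_range]
  constructor
  · rintro ⟨⟨τ, σ⟩, hx⟩
    exact ⟨⟨fun a => ⟨fun b => x.left (a, b), τ a⟩, σ⟩, by rw [Theta_mk_curry, hx]; rfl⟩
  · rintro ⟨w, rfl⟩
    exact ⟨_, (Theta_right G k l w).symm⟩

theorem statement4 (G : Type*) [Group G] (k l : ℕ) (hl : 1 ≤ l) :
    Subgroup.comap
        (SemidirectProduct.rightHom :
          Wreath G (Fin k × Fin l) →* Equiv.Perm (Fin k × Fin l))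
        (MonoidHom.range (wreathPermHom (Equiv.Perm (Fin l)) (Fin k) (Fin l))) =
      MonoidHom.range (Theta G k l) :=
  statement4_general G k l
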